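/- arXiv:2507.20087 — 4 statements merged into one kernel-verified Lean document; each statement's English description precedes it below -/
import Mathlib

section
/- One-move repair in the Threshold Region: Let m ≥ 2, let t : Fin n → ℕ be a position with every heap t i ≥ 1, let j be an index with t j ≥ m, assume C := prod_{i ≠ j} (t i) is coprime to m, let r be a natural number (a target losing residue), and assume that the full product prod_i (t i) is NOT congruent to r modulo m. Then there exists a natural number t' with 1 ≤ t' < t j and t j - t' ≤ m - 1 such that t' * C ≡ r (mod m). -/
/-- One-move repair in the Threshold Region: if `m ≥ 2`, all heaps are positive,
heap `j` satisfies `t j ≥ m`, the product `C` of the other heaps is coprime to `m`,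
and the full product is not congruent to the target residue `r` mod `m`, then one
move on heap `j` (decrement at most `m-1`) reaches residue `r`. -/
theorem one_move_repair (m n : ℕ) (hm : 2 ≤ m) (t : Fin n → ℕ)
    (ht : ∀ i, 1 ≤ t i) (j : Fin n) (hj : m ≤ t j)
    (hC : Nat.Coprime (∏ i ∈ Finset.univ.erase j, t i) m) (r : ℕ)
    (hr : ¬ (∏ i, t i) ≡ r [MOD m]) :
    ∃ t' : ℕ, 1 ≤ t' ∧ t' < t j ∧ t j - t' ≤ m - 1 ∧
      t' * (∏ i ∈ Finset.univ.erase j, t i) ≡ r [MOD m] := by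
  have hm0 : 0 < m := by omega
  haveI : NeZero m := ⟨by omega⟩
  set C := ∏ i ∈ Finset.univ.erase j, t i with hCdef
  have hu : IsUnit ((C : ZMod m)) := (ZMod.isUnit_iff_coprime C m).mpr hC
  have haC : ((r : ZMod m) * (C : ZMod m)⁻¹) * (C : ZMod m) = (r : ZMod m) := by
    rw [mul_assoc, ZMod.inv_mul_of_unit _ hu, mul_one]
  obtain ⟨a₀, ha₀lt, ha₀⟩ : ∃ a₀ : ℕ, a₀ < m ∧
      ((a₀ : ZMod m)) = (r : ZMod m) * (C : ZMod m)⁻¹ :=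
    ⟨((r : ZMod m) * (C : ZMod m)⁻¹).val, ZMod.val_lt _, by simp [ZMod.natCast_val, ZMod.cast_id]⟩
  have ha₀le : a₀ ≤ t j := le_trans (le_of_lt ha₀lt) hj
  obtain ⟨q, d, hdlt, hqd⟩ : ∃ q d : ℕ, d < m ∧ t j - a₀ = q * m + d :=
    ⟨(t j - a₀) / m, (t j - a₀) % m, Nat.mod_lt _ hm0,
      (Nat.div_add_mod' _ _).symm⟩
  have key : ∀ s : ℕ, s = a₀ + q * m → (s : ℕ) * C ≡ r [MOD m] := by
    intro s hs
    rw [← ZMod.natCast_eq_natCast_iff]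
    subst hs
    push_cast
    rw [ZMod.natCast_self, mul_zero, add_zero, ha₀]
    exact haC
  have hprod : (∏ i, t i) = t j * C := (Finset.mul_prod_erase _ _ (Finset.mem_univ j)).symm
  have hd0 : d ≠ 0 := by
    intro h0
    exact hr (by rw [hprod]; exact key (t j) (by omega))
  exact ⟨a₀ + q * m, by omega, by omega, by omega, key _ rfl⟩
end

section
/- Single-hole property in the Threshold Region (numeric form): Let m ≥ 2, let C be a natural number coprime to m, and let x ≥ m. Then the image of the interval of decrements Icc 1 (m-1) under the map d ↦ (C * (x - d)) mod m is exactly the set of all residues {0, 1, ..., m-1} with the single value (C * x) mod m removed; that is, (Finset.Icc 1 (m-1)).image (fun d => (C * (x - d)) % m) = (Finset.range m).erase ((C * x) % m). -/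
/-- Single-hole property in the Threshold Region (numeric form): for `m ≥ 2`,
`C` coprime to `m` and a heap `x ≥ m`, the residues reachable by the legal
decrements `d ∈ [1, m-1]` are exactly all residues mod `m` except the current
residue `(C * x) % m`. -/
theorem single_hole_numeric (m C x : ℕ) (hm : 2 ≤ m) (hC : Nat.Coprime C m)
    (hx : m ≤ x) :
    (Finset.Icc 1 (m - 1)).image (fun d => (C * (x - d)) % m) =
      (Finset.range m).erase ((C * x) % m) := by
  have hm0 : 0 < m := by omega
  -- key cancellation lemma
  have key : ∀ d₁ ∈ Finset.Icc 1 (m-1), ∀ d₂ ∈ Finset.Icc 1 (m-1),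
      (C * (x - d₁)) % m = (C * (x - d₂)) % m → d₁ = d₂ := by
    intro d₁ h1 d₂ h2 h
    simp only [Finset.mem_Icc] at h1 h2
    have hd1x : d₁ ≤ x := by omega
    have hd2x : d₂ ≤ x := by omega
    have hmod : C * (x - d₁) ≡ C * (x - d₂) [MOD m] := h
    have h' : (x - d₁) ≡ (x - d₂) [MOD m] := hmod.cancel_left_of_coprime hC.symm
    have h'' : (x - d₁) + (d₁ + d₂) ≡ (x - d₂) + (d₁ + d₂) [MOD m] := h'.add_right _
    have e1 : (x - d₁) + (d₁ + d₂) = x + d₂ := by omega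
    have e2 : (x - d₂) + (d₁ + d₂) = x + d₁ := by omega
    rw [e1, e2] at h''
    have h3 : d₂ ≡ d₁ [MOD m] := (Nat.ModEq.add_left_cancel' x h'')
    have : d₂ % m = d₁ % m := h3
    rw [Nat.mod_eq_of_lt (by omega), Nat.mod_eq_of_lt (by omega)] at this
    omega
  -- image avoids (C*x) % m
  have havoid : ∀ d ∈ Finset.Icc 1 (m-1), (C * (x - d)) % m ≠ (C * x) % m := by
    intro d hd h
    simp only [Finset.mem_Icc] at hd
    have hdx : d ≤ x := by omega
    have hmod : C * (x - d) ≡ C * x [MOD m] := h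
    have h' : (x - d) ≡ x [MOD m] := hmod.cancel_left_of_coprime hC.symm
    have h'' : (x - d) + d ≡ x + d [MOD m] := h'.add_right _
    have e1 : (x - d) + d = x := by omega
    rw [e1] at h''
    have h3 : x + 0 ≡ x + d [MOD m] := by simpa using h''
    have h4 : (0:ℕ) ≡ d [MOD m] := Nat.ModEq.add_left_cancel' x h3
    have : 0 % m = d % m := h4
    rw [Nat.zero_mod, Nat.mod_eq_of_lt (show d < m by omega)] at this
    omega
  apply Finset.eq_of_subset_of_card_le
  · intro r hr
    simp only [Finset.mem_image] at hr
    obtain ⟨d, hd, rfl⟩ := hr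
    refine Finset.mem_erase.mpr ⟨havoid d hd, ?_⟩
    exact Finset.mem_range.mpr (Nat.mod_lt _ hm0)
  · rw [Finset.card_erase_of_mem (Finset.mem_range.mpr (Nat.mod_lt _ hm0)),
      Finset.card_range, Finset.card_image_of_injOn key, Nat.card_Icc]
    omega
end

section
/- Exact losing count over a full block of integers: Let m ≥ 2, K ≥ 1 and n ≥ 1. Then the number of n-tuples t : Fin n → ℕ with 1 ≤ t i ≤ m*K and gcd(t i, m) = 1 for all i, and with prod_i (t i) ≡ 1 (mod m), is exactly (Nat.totient m)^(n-1) * K^n. -/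
section aux

variable {G : Type*} [CommGroup G]

/-- Tuples of length `k+1` with product one are equivalent to arbitrary tuples of
length `k`. -/
def prodOneEquiv (k : ℕ) : {g : Fin (k + 1) → G // ∏ i, g i = 1} ≃ (Fin k → G) where
  toFun g := fun i => g.1 i.succ
  invFun f := ⟨Fin.cons (∏ i, f i)⁻¹ f, by rw [Fin.prod_cons]; exact inv_mul_cancel _⟩
  left_inv := by
    rintro ⟨g, hg⟩
    apply Subtype.ext
    funext i
    show Fin.cons (α := fun _ : Fin (k+1) => G) (∏ i : Fin k, g i.succ)⁻¹ (fun i : Fin k => g i.succ) i = g i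
    have h0 : (∏ i : Fin k, g i.succ)⁻¹ = g 0 := by
      rw [Fin.prod_univ_succ] at hg
      exact inv_eq_of_mul_eq_one_left hg
    rw [h0]
    exact congrFun (Fin.cons_self_tail g) i
  right_inv := by
    intro f
    funext i
    simp

end aux

/-- Exact losing count over a full block of integers: for `m ≥ 2`, `K ≥ 1`,
`n ≥ 1`, the number of `n`-tuples of integers in `[1, mK]` coprime to `m`
whose product is `≡ 1 (mod m)` is `φ(m)^(n-1) * K^n`. -/
theorem losing_count_block (m K n : ℕ) (hm : 2 ≤ m) (hK : 1 ≤ K) (hn : 1 ≤ n) :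
    Nat.card {t : Fin n → ℕ //
        (∀ i, 1 ≤ t i ∧ t i ≤ m * K ∧ Nat.Coprime (t i) m) ∧
        (∏ i, t i) ≡ 1 [MOD m]} =
      (Nat.totient m) ^ (n - 1) * K ^ n := by
  haveI : NeZero m := ⟨by omega⟩
  have hm0 : 0 < m := by omega
  have E : {t : Fin n → ℕ //
        (∀ i, 1 ≤ t i ∧ t i ≤ m * K ∧ Nat.Coprime (t i) m) ∧
        (∏ i, t i) ≡ 1 [MOD m]} ≃
      {g : Fin n → (ZMod m)ˣ // ∏ i, g i = 1} × (Fin n → Fin K) := by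
    refine
      { toFun := fun t => (⟨fun i => ZMod.unitOfCoprime (t.1 i) (t.2.1 i).2.2, ?_⟩,
          fun i => ⟨t.1 i / m, ?_⟩)
        invFun := fun p => ⟨fun i => ((p.1.1 i : ZMod m)).val + (p.2 i) * m, ?_, ?_⟩
        left_inv := ?_
        right_inv := ?_ }
    · -- product of units is 1
      obtain ⟨t, ht, hprod⟩ := t
      apply Units.ext
      simp only [Units.coe_prod, ZMod.coe_unitOfCoprime, Units.val_one]
      rw [← Nat.cast_prod, ← Nat.cast_one, ZMod.natCast_eq_natCast_iff]
      exact hprod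
    · -- t i / m < K
      obtain ⟨t, ht, hprod⟩ := t
      obtain ⟨h1, h2, hco⟩ := ht i
      have hndvd : ¬ m ∣ t i := by
        intro h
        have hd : m ∣ Nat.gcd (t i) m := Nat.dvd_gcd h dvd_rfl
        rw [hco] at hd
        have := Nat.le_of_dvd one_pos hd
        omega
      show t i / m < K
      rw [Nat.div_lt_iff_lt_mul hm0, mul_comm]
      rcases lt_or_eq_of_le h2 with h | h
      · omega
      · exact absurd (h ▸ Dvd.intro K rfl) hndvd
    · -- range/coprime conditions for inverse
      intro i
      obtain ⟨⟨g, hg⟩, j⟩ := p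
      have hval : ((g i : ZMod m)).val < m := ZMod.val_lt _
      have hcop : Nat.Coprime ((g i : ZMod m)).val m := ZMod.val_coe_unit_coprime (g i)
      have hvalpos : 0 < ((g i : ZMod m)).val := by
        rcases Nat.eq_zero_or_pos ((g i : ZMod m)).val with h | h
        · rw [h, Nat.coprime_zero_left] at hcop; omega
        · exact h
      have hjK : (j i : ℕ) < K := (j i).2
      refine ⟨by simpa using Nat.le_add_right _ _ |>.trans' hvalpos, ?_, ?_⟩
      · simp only
        nlinarith
      · simpa using (Nat.coprime_add_mul_right_left _ m (j i)).mpr hcop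
    · -- product ≡ 1 for inverse
      obtain ⟨⟨g, hg⟩, j⟩ := p
      have key : ((∏ i, (((g i : ZMod m)).val + (j i : ℕ) * m) : ℕ) : ZMod m)
          = ((1 : ℕ) : ZMod m) := by
        rw [Nat.cast_prod]
        have : ∀ i ∈ Finset.univ, (((((g i : ZMod m)).val + (j i : ℕ) * m : ℕ)) : ZMod m)
            = (g i : ZMod m) := by
          intro i _
          push_cast
          simp [ZMod.natCast_val, ZMod.cast_id, ZMod.natCast_self]
        rw [Finset.prod_congr rfl this, ← Units.coe_prod, hg]
        simp
      exact (ZMod.natCast_eq_natCast_iff _ _ _).mp key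
    · -- left inverse
      rintro ⟨t, ht, hprod⟩
      apply Subtype.ext
      funext i
      simp only [ZMod.coe_unitOfCoprime, ZMod.val_natCast]
      exact Nat.mod_add_div' (t i) m
    · -- right inverse
      rintro ⟨⟨g, hg⟩, j⟩
      refine Prod.ext ?_ ?_
      · apply Subtype.ext
        funext i
        apply Units.ext
        simp only [ZMod.coe_unitOfCoprime]
        push_cast
        simp [ZMod.natCast_val, ZMod.cast_id, ZMod.natCast_self]
      · funext i
        apply Fin.ext
        simp only
        have hval : ((g i : ZMod m)).val < m := ZMod.val_lt _
        rw [Nat.add_mul_div_right _ _ hm0, Nat.div_eq_of_lt hval, zero_add]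
  rw [Nat.card_congr E]
  obtain ⟨k, rfl⟩ : ∃ k, n = k + 1 := ⟨n - 1, by omega⟩
  rw [Nat.card_prod, Nat.card_congr (prodOneEquiv k), Nat.add_sub_cancel]
  congr 1
  · rw [Nat.card_pi]
    simp [Nat.card_eq_fintype_card, ZMod.card_units_eq_totient]
  · rw [Nat.card_pi]
    simp
end

section
/- Asymptotic losing density for unbounded integer MuM (unit-restricted): Let m ≥ 2 and n ≥ 1. For X ∈ ℕ, let A(X) be the number of n-tuples t : Fin n → ℕ with 1 ≤ t i ≤ X and gcd(t i, m) = 1 for all i and prod_i (t i) ≡ 1 (mod m), and let B(X) be the number of n-tuples with 1 ≤ t i ≤ X and gcd(t i, m) = 1 for all i. Then the ratio A(X)/B(X) (as a real number) tends to 1/φ(m) as X → ∞, where φ is Euler's totient function. -/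
/-!
Split off the first coordinate. Once the other coordinates `t'` are fixed (all coprime to `m`),
the admissible first coordinates `x ≤ X` are exactly those with `x ≡ (∏ t')⁻¹ (mod m)`, a single
residue class, so there are between `q` and `q + 1` of them, where `q = ⌊(X + 1) / m⌋`.
Likewise the number `s` of `x ≤ X` coprime to `m` lies between `φ(m) q` and `φ(m) (q + 1)`;
both estimates come from counting a predicate of period `m` over `q` full periods.
Hence `A(X) = s^(n-1) (q + O(1))` and `B(X) = s^n = s^(n-1) (φ(m) q + O(1))`.
-/

open Filter Finset Topology

namespace Nat

variable {p : ℕ → Prop} [DecidablePred p] {a : ℕ}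

theorem count_mul_of_periodic (hp : Function.Periodic p a) (q : ℕ) :
    count p (a * q) = count p a * q := by
  induction q with
  | zero => simp
  | succ q ih =>
    have hshift : (fun k ↦ p (a * q + k)) = p := funext fun k ↦ by
      simpa [add_comm, mul_comm] using hp.nat_mul q k
    simp only [mul_add_one, count_add, ih, hshift]

theorem count_bounds_of_periodic (ha : 0 < a) (hp : Function.Periodic p a) (b : ℕ) :
    count p a * (b / a) ≤ count p b ∧ count p b ≤ count p a * (b / a + 1) := by
  rw [← count_mul_of_periodic hp, ← count_mul_of_periodic hp]
  refine ⟨count_monotone p (mul_div_le b a), count_monotone p ?_⟩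
  rw [mul_add_one, mul_comm]
  exact (lt_div_mul_add ha).le

theorem count_coprime_self (m : ℕ) : count m.Coprime m = Nat.totient m := by
  rw [count_eq_card_filter_range, totient_eq_card_coprime]

theorem count_natCast_eq (m : ℕ) [NeZero m] (c : ZMod m) :
    count (fun x : ℕ ↦ (x : ZMod m) = c) m = 1 := by
  rw [count_eq_card_filter_range, card_eq_one]
  refine ⟨c.val, ext fun x ↦ ?_⟩
  simp only [mem_filter, mem_range, mem_singleton]
  constructor
  · rintro ⟨hx, rfl⟩
    exact (ZMod.val_cast_of_lt hx).symm
  · rintro rfl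
    exact ⟨ZMod.val_lt c, ZMod.natCast_zmod_val c⟩

theorem count_natCast_mul_eq_one {m : ℕ} [NeZero m] {u : ZMod m} (hu : IsUnit u) :
    count (fun x : ℕ ↦ (x : ZMod m) * u = 1) m = 1 := by
  have h : (fun x : ℕ ↦ (x : ZMod m) * u = 1) = fun x : ℕ ↦ (x : ZMod m) = ↑hu.unit⁻¹ :=
    funext fun x ↦ by rw [← Units.mul_eq_one_iff_eq_inv, hu.unit_spec]
  simp only [h, count_natCast_eq]

end Nat

theorem ZMod.periodic_comp_natCast {β : Type*} (m : ℕ) (f : ZMod m → β) :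
    Function.Periodic (fun x : ℕ ↦ f x) m := fun x ↦ by simp

theorem Finset.card_filter_piFinset_const_succ {α : Type*} {k : ℕ} (s : Finset α)
    (P : (Fin (k + 1) → α) → Prop) [DecidablePred P] :
    #{t ∈ Fintype.piFinset fun _ ↦ s | P t} =
      ∑ t ∈ Fintype.piFinset fun _ : Fin k ↦ s, #{x ∈ s | P (Fin.cons x t)} := by
  have hpi : (Fintype.piFinset fun _ : Fin (k + 1) ↦ s) =
      (s ×ˢ Fintype.piFinset fun _ : Fin k ↦ s).map
        (Fin.consEquiv fun _ ↦ α).toEmbedding := by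
    have h := filter_piFinset_eq_map_consEquiv (fun _ : Fin (k + 1) ↦ s) (fun _ ↦ True)
    rwa [filter_true_of_mem fun _ _ ↦ trivial, filter_true_of_mem fun _ _ ↦ trivial] at h
  rw [hpi, filter_map, card_map, card_filter, sum_product_right]
  refine sum_congr rfl fun t _ ↦ ?_
  rw [card_filter]
  rfl

theorem coprime_iff_mem_filter_range {m x X : ℕ} (hm : m ≠ 1) :
    (1 ≤ x ∧ x ≤ X ∧ x.Coprime m) ↔ x ∈ {x ∈ range (X + 1) | m.Coprime x} := by
  rw [mem_filter, mem_range, Nat.coprime_comm]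
  constructor
  · rintro ⟨-, hxX, hx⟩
    exact ⟨by omega, hx⟩
  · rintro ⟨hxX, hx⟩
    refine ⟨Nat.pos_of_ne_zero ?_, by omega, hx⟩
    rintro rfl
    exact hm ((Nat.coprime_zero_right m).mp hx)

theorem natCard_coprime_tuples {m n : ℕ} (hm : m ≠ 1) (X : ℕ) :
    Nat.card {t : Fin n → ℕ // ∀ i, 1 ≤ t i ∧ t i ≤ X ∧ (t i).Coprime m} =
      Nat.count m.Coprime (X + 1) ^ n := by
  rw [Nat.subtype_card (Fintype.piFinset fun _ ↦ {x ∈ range (X + 1) | m.Coprime x})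
    fun t ↦ by simp only [Fintype.mem_piFinset, coprime_iff_mem_filter_range hm],
    Fintype.card_piFinset_const, Nat.count_eq_card_filter_range]

theorem natCard_coprime_tuples_prod_modEq_one {m k : ℕ} (hm : m ≠ 1) (X : ℕ) :
    Nat.card {t : Fin (k + 1) → ℕ //
        (∀ i, 1 ≤ t i ∧ t i ≤ X ∧ (t i).Coprime m) ∧ (∏ i, t i) ≡ 1 [MOD m]} =
      ∑ t ∈ Fintype.piFinset fun _ : Fin k ↦ {x ∈ range (X + 1) | m.Coprime x},
        Nat.count (fun x : ℕ ↦ (x : ZMod m) * ∏ i, (t i : ZMod m) = 1) (X + 1) := by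
  rw [Nat.subtype_card {t ∈ Fintype.piFinset fun _ ↦ {x ∈ range (X + 1) | m.Coprime x} |
      ∏ i, (t i : ZMod m) = 1}
    fun t ↦ by simp only [mem_filter, Fintype.mem_piFinset, coprime_iff_mem_filter_range hm,
      ← ZMod.natCast_eq_natCast_iff, Nat.cast_prod, Nat.cast_one],
    card_filter_piFinset_const_succ]
  refine sum_congr rfl fun t _ ↦ ?_
  simp only [Fin.prod_univ_succ, Fin.cons_zero, Fin.cons_succ, filter_filter,
    Nat.count_eq_card_filter_range]
  refine congrArg card (filter_congr fun x _ ↦ and_iff_right_of_imp fun hx ↦ ?_)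
  exact (ZMod.isUnit_iff_coprime x m).mp (IsUnit.of_mul_eq_one _ hx) |>.symm

theorem tendsto_div_of_mul_le_of_le_mul_add_one {α : Type*} {l : Filter α} {q f : α → ℝ}
    {c : ℝ} (hq : Tendsto q l atTop) (hf : ∀ᶠ x in l, c * q x ≤ f x ∧ f x ≤ c * (q x + 1)) :
    Tendsto (fun x ↦ f x / q x) l (𝓝 c) := by
  have hupper : Tendsto (fun x ↦ c * (1 + (q x)⁻¹)) l (𝓝 c) := by
    simpa using ((tendsto_inv_atTop_zero.comp hq).const_add 1).const_mul c
  refine tendsto_of_tendsto_of_tendsto_of_le_of_le' tendsto_const_nhds hupper ?_ ?_ <;>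
    filter_upwards [hf, hq.eventually_gt_atTop 0] with x ⟨hlow, hup⟩ hqx
  · rwa [le_div_iff₀ hqx]
  · rwa [div_le_iff₀ hqx, mul_assoc, add_mul, inv_mul_cancel₀ hqx.ne', one_mul]

theorem tendsto_div_mul_of_bounds {α : Type*} {l : Filter α} {q f g w : α → ℝ} {c : ℝ}
    (hc : c ≠ 0) (hq : Tendsto q l atTop) (hw : ∀ᶠ x in l, 0 < w x)
    (hf : ∀ᶠ x in l, w x * q x ≤ f x ∧ f x ≤ w x * (q x + 1))
    (hg : ∀ᶠ x in l, c * q x ≤ g x ∧ g x ≤ c * (q x + 1)) :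
    Tendsto (fun x ↦ f x / (w x * g x)) l (𝓝 (1 / c)) := by
  have hf' : ∀ᶠ x in l, 1 * q x ≤ f x / w x ∧ f x / w x ≤ 1 * (q x + 1) := by
    filter_upwards [hf, hw] with x ⟨hlow, hup⟩ hwx
    rw [one_mul, one_mul, le_div_iff₀ hwx, div_le_iff₀ hwx]
    exact ⟨(mul_comm _ _).trans_le hlow, hup.trans_eq (mul_comm _ _)⟩
  refine ((tendsto_div_of_mul_le_of_le_mul_add_one hq hf').div
    (tendsto_div_of_mul_le_of_le_mul_add_one hq hg) hc).congr' ?_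
  filter_upwards [hq.eventually_gt_atTop 0] with x hqx
  simp only [Pi.div_apply]
  rw [div_div_div_cancel_right₀ hqx.ne', div_div]

theorem sum_count_natCast_mul_eq_one_bounds {m : ℕ} [NeZero m] {ι : Type*} (T : Finset ι)
    {u : ι → ZMod m} (hu : ∀ i ∈ T, IsUnit (u i)) (b : ℕ) :
    #T * (b / m) ≤ ∑ i ∈ T, Nat.count (fun x : ℕ ↦ (x : ZMod m) * u i = 1) b ∧
      ∑ i ∈ T, Nat.count (fun x : ℕ ↦ (x : ZMod m) * u i = 1) b ≤ #T * (b / m + 1) := by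
  have h i (hi : i ∈ T) := Nat.count_natCast_mul_eq_one (hu i hi) ▸
    Nat.count_bounds_of_periodic (NeZero.pos m) (ZMod.periodic_comp_natCast m (· * u i = 1)) b
  refine ⟨card_nsmul_le_sum _ _ _ fun i hi ↦ ?_, sum_le_card_nsmul _ _ _ fun i hi ↦ ?_⟩
  · simpa using (h i hi).1
  · simpa using (h i hi).2

/-- Asymptotic losing density for unbounded integer MuM (unit-restricted):
the proportion of `n`-tuples of integers in `[1, X]` coprime to `m` whose
product is `≡ 1 (mod m)` tends to `1/φ(m)` as `X → ∞`. -/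
theorem losing_density_asymptotic (m n : ℕ) (hm : 2 ≤ m) (hn : 1 ≤ n)
    (A B : ℕ → ℕ)
    (hA : ∀ X, A X = Nat.card {t : Fin n → ℕ //
        (∀ i, 1 ≤ t i ∧ t i ≤ X ∧ Nat.Coprime (t i) m) ∧ (∏ i, t i) ≡ 1 [MOD m]})
    (hB : ∀ X, B X = Nat.card {t : Fin n → ℕ //
        ∀ i, 1 ≤ t i ∧ t i ≤ X ∧ Nat.Coprime (t i) m}) :
    Tendsto (fun X => (A X : ℝ) / (B X : ℝ)) atTop
      (nhds (1 / (Nat.totient m : ℝ))) := by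
  obtain ⟨k, rfl⟩ : ∃ k, n = k + 1 := ⟨n - 1, by omega⟩
  have hm1 : m ≠ 1 := by omega
  have : NeZero m := ⟨by omega⟩
  set s : ℕ → ℕ := fun X ↦ Nat.count m.Coprime (X + 1)
  set q : ℕ → ℕ := fun X ↦ (X + 1) / m
  have hq : Tendsto (fun X ↦ (q X : ℝ)) atTop atTop := tendsto_natCast_atTop_atTop.comp <|
    (Nat.tendsto_div_const_atTop (NeZero.ne m)).comp (tendsto_add_atTop_nat 1)
  have hs X : Nat.totient m * q X ≤ s X ∧ s X ≤ Nat.totient m * (q X + 1) := by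
    simpa only [Nat.count_coprime_self] using
      Nat.count_bounds_of_periodic (NeZero.pos m) (Nat.periodic_coprime m) (X + 1)
  have hA' X : s X ^ k * q X ≤ A X ∧ A X ≤ s X ^ k * (q X + 1) := by
    have hT : #(Fintype.piFinset fun _ : Fin k ↦ {x ∈ range (X + 1) | m.Coprime x}) =
        s X ^ k := by
      rw [Fintype.card_piFinset_const, ← Nat.count_eq_card_filter_range]
    rw [hA, natCard_coprime_tuples_prod_modEq_one hm1, ← hT]
    refine sum_count_natCast_mul_eq_one_bounds _
      (fun t ht ↦ IsUnit.prod_univ_iff.mpr fun i ↦ ?_) _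
    exact (ZMod.isUnit_iff_coprime _ m).mpr (mem_filter.mp (Fintype.mem_piFinset.mp ht i)).2.symm
  have hB' X : (B X : ℝ) = (s X : ℝ) ^ k * s X := by
    rw [hB, natCard_coprime_tuples hm1, pow_succ]; push_cast; rfl
  have hφ : (Nat.totient m : ℝ) ≠ 0 := Nat.cast_ne_zero.mpr (NeZero.ne _)
  refine (tendsto_div_mul_of_bounds hφ hq ?_ ?_ ?_).congr fun X ↦ by rw [hB']
  · filter_upwards [(tendsto_natCast_atTop_iff.mp hq).eventually_ge_atTop 1] with X hX
    have : 0 < s X := (Nat.mul_pos (Nat.totient_pos.mpr (NeZero.pos m)) hX).trans_le (hs X).1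
    positivity
  · exact Eventually.of_forall fun X ↦ by exact_mod_cast hA' X
  · exact Eventually.of_forall fun X ↦ by exact_mod_cast hs X
end
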